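/- Let H be a finite-dimensional real Hilbert space and C : [0,T] ⇉ H a set-valued map satisfying conditions (H1), (H2) and (H3). Assume there exists γ > 0 such that for every t ∈ [0,T] and every x ∈ bd C(t) there is a unit vector ℓ satisfying ⟨ℓ, n⟩ ≤ −γ for every unit vector n ∈ N^P(C(t); x). Then C satisfies condition (H5). -/

import Mathlib

open Set Metric
open scoped ENNReal

/-- The proximal normal cone of a set `S` at a point `x`. -/
def proxNormalCone {H : Type*} [NormedAddCommGroup H] [InnerProductSpace ℝ H]
    (S : Set H) (x : H) : Set H :=
  {ζ | ∃ σ : ℝ, 0 ≤ σ ∧ ∀ y ∈ S, (inner ℝ ζ (y - x) : ℝ) ≤ σ * ‖y - x‖ ^ 2}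

/-- A set `S` is `ρ`-uniformly prox-regular. -/
def UniformProxRegular {H : Type*} [NormedAddCommGroup H] [InnerProductSpace ℝ H]
    (ρ : ℝ) (S : Set H) : Prop :=
  ∀ x ∈ S, ∀ ζ ∈ proxNormalCone S x, ∀ x' ∈ S,
    (inner ℝ ζ (x' - x) : ℝ) ≤ ‖ζ‖ / (2 * ρ) * ‖x' - x‖ ^ 2

/-- A set-valued map is Hausdorff-continuous on `[0,T]`. -/
def HausdorffCts {H : Type*} [NormedAddCommGroup H] (T : ℝ) (C : ℝ → Set H) : Prop :=
  ∀ ε > 0, ∃ δ > 0, ∀ s ∈ Icc (0:ℝ) T, ∀ t ∈ Icc (0:ℝ) T, |s - t| < δ →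
    EMetric.hausdorffEdist (C s) (C t) < ENNReal.ofReal ε

/-- Condition (H5) with constants `δ, L`. -/
def CondH5 {H : Type*} [NormedAddCommGroup H] [InnerProductSpace ℝ H]
    (T : ℝ) (C : ℝ → Set H) (δ L : ℝ) : Prop :=
  ∀ t ∈ Icc (0:ℝ) T, ∀ x ∈ frontier (C t), ∃ ℓ : H, ‖ℓ‖ = 1 ∧
    ∀ y ∈ C t, ‖y - x‖ < δ → ∀ n ∈ proxNormalCone (C t) y, ‖n‖ = 1 →
      (inner ℝ ℓ n : ℝ) ≤ -(1 / L)

/-!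
Argue by contradiction. If (H5) fails with `δ = 1/(k+1)` and `L = 2/γ` for every `k`, we get
times `tₖ` and boundary points `xₖ ∈ bd C(tₖ)` such that, for every unit `ℓ`, some point `yₖ`
within `1/(k+1)` of `xₖ` carries a unit proximal normal `nₖ` with `⟨ℓ, nₖ⟩ > -γ/2`. Let
`tₖ → t₀` along an ultrafilter. By prox-regularity a unit proximal normal at `yₖ` gives an
exterior ball of radius `ρ` to `C(tₖ)`, hence almost one to `C(t₀)`, which forces `yₖ` to be
close to `bd C(t₀)`; compactness of that boundary makes `xₖ → x₀ ∈ bd C(t₀)`. Taking `ℓ` from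
the hypothesis at `x₀`, a limit `n₀` of the normals `nₖ` is again a proximal normal at `x₀`,
since the prox-regularity inequality passes to Hausdorff limits; but then `⟨ℓ, n₀⟩` is both
`≤ -γ` and `≥ -γ/2`.
-/

open Filter Topology

theorem IsPreconnected.inter_frontier_nonempty {X : Type*} [TopologicalSpace X] {s t : Set X}
    (hs : IsPreconnected s) (hst : (s ∩ t).Nonempty) (hst' : (s \ t).Nonempty) :
    (s ∩ frontier t).Nonempty := by
  by_contra h
  have hint : ∀ x ∈ s, x ∈ closure t → x ∈ interior t := fun x hxs hxt =>
    by_contra fun hx => h ⟨x, hxs, hxt, hx⟩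
  obtain ⟨p, hps, hpt⟩ := hst
  have hsub : s ⊆ interior t := hs.subset_of_closure_inter_subset isOpen_interior
    ⟨p, hps, hint p hps (subset_closure hpt)⟩
    fun x ⟨hx, hxs⟩ => hint x hxs (closure_mono interior_subset hx)
  obtain ⟨q, hqs, hqt⟩ := hst'
  exact hqt (interior_subset (hsub hqs))

theorem exists_mem_frontier_dist_le {E : Type*} [NormedAddCommGroup E] [NormedSpace ℝ E]
    {S : Set E} (hS : IsClosed S) {p q : E} (hp : p ∈ S) {r : ℝ} (hr : 0 < r)
    (hq : ∀ z ∈ S, r ≤ dist z q) :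
    ∃ w ∈ frontier S, dist p w ≤ dist p q - r := by
  have hqS : q ∉ S := fun hqS => by linarith [hq q hqS, dist_self q]
  obtain ⟨w, hw, hwS⟩ := (convex_segment p q).isPreconnected.inter_frontier_nonempty
    ⟨p, left_mem_segment ℝ p q, hp⟩ ⟨q, right_mem_segment ℝ p q, hqS⟩
  exact ⟨w, hwS, by linarith [hq w (hS.frontier_subset hwS), dist_add_dist_of_mem_segment hw]⟩

theorem tendsto_of_norm_sub_lt_one_div {E : Type*} [SeminormedAddCommGroup E] {l : Filter ℕ}
    (hl : l ≤ atTop) {x y : ℕ → E} {a : E} (hx : Tendsto x l (𝓝 a))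
    (hxy : ∀ k, ‖x k - y k‖ < 1 / (k + 1)) : Tendsto y l (𝓝 a) := by
  have hsub : Tendsto (fun k => x k - y k) l (𝓝 0) :=
    squeeze_zero_norm (fun k => (hxy k).le) (tendsto_one_div_add_atTop_nhds_zero_nat.mono_left hl)
  simpa using hx.sub hsub

theorem IsCompact.exists_tendsto_of_ultrafilter {X ι : Type*} [TopologicalSpace X] {K : Set X}
    (hK : IsCompact K) (U : Ultrafilter ι) {x : ι → X} (hx : ∀ᶠ i in U, x i ∈ K) :
    ∃ x₀ ∈ K, Tendsto x U (𝓝 x₀) :=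
  hK.ultrafilter_le_nhds (U.map x) (by rwa [Ultrafilter.coe_map, le_principal_iff])

theorem exists_tendsto_of_eventually_mem_cthickening {X ι : Type*} [MetricSpace X]
    [ProperSpace X] (U : Ultrafilter ι) {K : Set X} (hK : IsCompact K) {x : ι → X}
    (hx : ∀ δ > 0, ∀ᶠ i in U, x i ∈ cthickening δ K) :
    ∃ x₀ ∈ K, Tendsto x U (𝓝 x₀) := by
  obtain ⟨x₀, -, hxU⟩ := (hK.cthickening (r := 1)).exists_tendsto_of_ultrafilter U (hx 1 one_pos)
  refine ⟨x₀, ?_, hxU⟩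
  rw [← hK.isClosed.closure_eq, closure_eq_iInter_cthickening]
  exact mem_iInter₂.2 fun δ hδ => isClosed_cthickening.mem_of_tendsto hxU (hx δ hδ)

theorem HausdorffCts.tendsto_hausdorffEDist {E ι : Type*} [NormedAddCommGroup E] {T : ℝ}
    {C : ℝ → Set E} (hC : HausdorffCts T C) {l : Filter ι} {s : ι → ℝ}
    (hs : ∀ i, s i ∈ Icc 0 T) {t : ℝ} (ht : t ∈ Icc 0 T) (hst : Tendsto s l (𝓝 t)) :
    Tendsto (fun i => hausdorffEDist (C (s i)) (C t)) l (𝓝 0) := by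
  refine ENNReal.tendsto_nhds_zero.2 fun ε hε => ?_
  obtain ⟨r, -, hr, hrε⟩ := ENNReal.lt_iff_exists_real_btwn.1 hε
  obtain ⟨δ, hδ, hCδ⟩ := hC r (ENNReal.ofReal_pos.1 hr)
  filter_upwards [hst.eventually (ball_mem_nhds t hδ)] with i hi
  exact (hCδ _ (hs i) _ ht hi).le.trans hrε.le

section ProxNormal

variable {H : Type*} [NormedAddCommGroup H] [InnerProductSpace ℝ H]

/-- For a unit vector `n` this says that the open ball of radius `ρ` about `y + ρ • n`
misses `S`. -/
def IsProxNormalOfRadius (ρ : ℝ) (S : Set H) (y n : H) : Prop :=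
  ∀ z ∈ S, inner ℝ n (z - y) ≤ 1 / (2 * ρ) * ‖z - y‖ ^ 2

theorem UniformProxRegular.isProxNormalOfRadius {ρ : ℝ} {S : Set H} {y n : H}
    (hS : UniformProxRegular ρ S) (hy : y ∈ S) (hn : n ∈ proxNormalCone S y) (hn1 : ‖n‖ = 1) :
    IsProxNormalOfRadius ρ S y n := fun z hz => by
  simpa only [hn1] using hS y hy n hn z hz

namespace IsProxNormalOfRadius

variable {ρ : ℝ} {S : Set H} {y n : H}

theorem mem_proxNormalCone (h : IsProxNormalOfRadius ρ S y n) (hρ : 0 ≤ ρ) :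
    n ∈ proxNormalCone S y :=
  ⟨1 / (2 * ρ), by positivity, h⟩

theorem le_dist (h : IsProxNormalOfRadius ρ S y n) (hρ : 0 < ρ) (hn : ‖n‖ = 1) {z : H}
    (hz : z ∈ S) : ρ ≤ dist z (y + ρ • n) := by
  have hsq : dist z (y + ρ • n) ^ 2 = ‖z - y‖ ^ 2 - 2 * ρ * inner ℝ n (z - y) + ρ ^ 2 := by
    rw [dist_eq_norm, show z - (y + ρ • n) = (z - y) - ρ • n by abel, norm_sub_sq_real,
      real_inner_smul_right, norm_smul, Real.norm_eq_abs, abs_of_pos hρ, hn, real_inner_comm]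
    ring
  have hinner : 2 * ρ * inner ℝ n (z - y) ≤ ‖z - y‖ ^ 2 :=
    calc 2 * ρ * inner ℝ n (z - y) ≤ 2 * ρ * (1 / (2 * ρ) * ‖z - y‖ ^ 2) := by gcongr; exact h z hz
      _ = ‖z - y‖ ^ 2 := by field_simp
  nlinarith [dist_nonneg (x := z) (y := y + ρ • n)]

/-- The exterior ball at `y` survives, slightly shrunk, in any set `B` Hausdorff-close to `S`,
and a segment from a point of `B` near `y` towards its centre then leaves `B` near `y`. -/
theorem mem_cthickening_frontier (h : IsProxNormalOfRadius ρ S y n) (hn : ‖n‖ = 1)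
    (hy : y ∈ S) {B : Set H} (hB : IsClosed B) {ε : ℝ} (hε : 0 < ε) (hερ : ε < ρ)
    (hSB : hausdorffEDist S B < ENNReal.ofReal ε) :
    y ∈ cthickening (3 * ε) (frontier B) := by
  obtain ⟨p, hpB, hyp⟩ := exists_edist_lt_of_hausdorffEDist_lt hy hSB
  rw [edist_lt_ofReal] at hyp
  have hfar : ∀ z ∈ B, ρ - ε ≤ dist z (y + ρ • n) := fun z hz => by
    obtain ⟨w, hwS, hzw⟩ :=
      exists_edist_lt_of_hausdorffEDist_lt hz (hausdorffEDist_comm.trans_lt hSB)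
    rw [edist_lt_ofReal] at hzw
    linarith [h.le_dist (hε.trans hερ) hn hwS, dist_triangle w z (y + ρ • n), dist_comm z w]
  obtain ⟨w, hwB, hpw⟩ := exists_mem_frontier_dist_le hB hpB (by linarith) hfar
  have hcentre : dist y (y + ρ • n) = ρ := by
    rw [dist_self_add_right, norm_smul, hn, mul_one, Real.norm_of_nonneg (hε.trans hερ).le]
  refine mem_cthickening_of_dist_le y w _ _ hwB ?_
  linarith [dist_triangle y p w, dist_triangle p y (y + ρ • n), dist_comm y p]

theorem of_tendsto {ι : Type*} {l : Filter ι} [l.NeBot] {A : ι → Set H} {B : Set H}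
    {y n : ι → H} {x m : H} (hAB : Tendsto (fun i => hausdorffEDist (A i) B) l (𝓝 0))
    (hy : Tendsto y l (𝓝 x)) (hn : Tendsto n l (𝓝 m))
    (h : ∀ i, IsProxNormalOfRadius ρ (A i) (y i) (n i)) : IsProxNormalOfRadius ρ B x m := by
  intro z hz
  let K : Set (H × H × H) := {p | inner ℝ p.1 (p.2.2 - p.2.1) ≤ 1 / (2 * ρ) * ‖p.2.2 - p.2.1‖ ^ 2}
  have hK : IsClosed K := isClosed_le (by fun_prop) (by fun_prop)
  suffices (m, x, z) ∈ closure K from hK.closure_subset this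
  refine Metric.mem_closure_iff.2 fun ε hε => ?_
  obtain ⟨i, hAi, hyi, hni⟩ := ((hAB.eventually (gt_mem_nhds (ENNReal.ofReal_pos.2 hε))).and
    ((hy.eventually (ball_mem_nhds x hε)).and (hn.eventually (ball_mem_nhds m hε)))).exists
  obtain ⟨w, hw, hzw⟩ :=
    exists_edist_lt_of_hausdorffEDist_lt hz (hausdorffEDist_comm.trans_lt hAi)
  rw [edist_lt_ofReal] at hzw
  refine ⟨(n i, y i, w), h i w hw, ?_⟩
  simp only [Prod.dist_eq, max_lt_iff]
  exact ⟨by rwa [dist_comm], by rwa [dist_comm], hzw⟩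

end IsProxNormalOfRadius

variable {ι : Type*} [ProperSpace H] {U : Ultrafilter ι} {ρ : ℝ} {A : ι → Set H} {B : Set H}
  {y n : ι → H}

theorem exists_tendsto_mem_frontier_of_uniformProxRegular (hρ : 0 < ρ)
    (hA : ∀ i, UniformProxRegular ρ (A i)) (hB : IsClosed B) (hBF : IsCompact (frontier B))
    (hAB : Tendsto (fun i => hausdorffEDist (A i) B) U (𝓝 0)) (hy : ∀ i, y i ∈ A i)
    (hn : ∀ i, n i ∈ proxNormalCone (A i) (y i)) (hn1 : ∀ i, ‖n i‖ = 1) :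
    ∃ x₀ ∈ frontier B, Tendsto y U (𝓝 x₀) := by
  refine exists_tendsto_of_eventually_mem_cthickening U hBF fun δ hδ => ?_
  have hε : 0 < min (δ / 3) (ρ / 2) := by positivity
  filter_upwards [hAB.eventually (gt_mem_nhds (ENNReal.ofReal_pos.2 hε))] with i hi
  have hyi := ((hA i).isProxNormalOfRadius (hy i) (hn i) (hn1 i)).mem_cthickening_frontier
    (hn1 i) (hy i) hB hε (by linarith [min_le_right (δ / 3) (ρ / 2)]) hi
  exact cthickening_mono (by linarith [min_le_left (δ / 3) (ρ / 2)]) _ hyi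

theorem exists_tendsto_mem_proxNormalCone_of_uniformProxRegular (hρ : 0 < ρ)
    (hA : ∀ i, UniformProxRegular ρ (A i))
    (hAB : Tendsto (fun i => hausdorffEDist (A i) B) U (𝓝 0)) {x₀ : H}
    (hyx₀ : Tendsto y U (𝓝 x₀)) (hy : ∀ i, y i ∈ A i)
    (hn : ∀ i, n i ∈ proxNormalCone (A i) (y i)) (hn1 : ∀ i, ‖n i‖ = 1) :
    ∃ n₀ ∈ proxNormalCone B x₀, ‖n₀‖ = 1 ∧ Tendsto n U (𝓝 n₀) := by
  obtain ⟨n₀, hn₀, hnU⟩ := (isCompact_sphere (0 : H) 1).exists_tendsto_of_ultrafilter U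
    (.of_forall fun i => mem_sphere_zero_iff_norm.2 (hn1 i))
  refine ⟨n₀, ?_, mem_sphere_zero_iff_norm.1 hn₀, hnU⟩
  exact (IsProxNormalOfRadius.of_tendsto hAB hyx₀ hnU fun i =>
    (hA i).isProxNormalOfRadius (hy i) (hn i) (hn1 i)).mem_proxNormalCone hρ.le

end ProxNormal

theorem stmt10_general {H : Type*} [NormedAddCommGroup H] [InnerProductSpace ℝ H]
    [FiniteDimensional ℝ H]
    (T : ℝ) (C : ℝ → Set H)
    (ρ : ℝ) (hρ : 0 < ρ)
    (hH1 : ∀ t ∈ Icc (0:ℝ) T, (C t).Nonempty ∧ IsClosed (C t) ∧ UniformProxRegular ρ (C t))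
    (hH2 : HausdorffCts T C)
    (hH3 : ∀ t ∈ Icc (0:ℝ) T, IsCompact (frontier (C t)))
    (γ : ℝ) (hγ : 0 < γ)
    (hsup : ∀ t ∈ Icc (0:ℝ) T, ∀ x ∈ frontier (C t), ∃ ℓ : H, ‖ℓ‖ = 1 ∧
      ∀ n ∈ proxNormalCone (C t) x, ‖n‖ = 1 → (inner ℝ ℓ n : ℝ) ≤ -γ) :
    ∃ δ > 0, ∃ L > 0, CondH5 T C δ L := by
  by_contra hH5
  have hbad : ∀ k : ℕ, ∃ t ∈ Icc (0:ℝ) T, ∃ x ∈ frontier (C t), ∀ ℓ : H, ‖ℓ‖ = 1 →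
      ∃ y ∈ C t, ‖y - x‖ < 1 / (k + 1) ∧
        ∃ n ∈ proxNormalCone (C t) y, ‖n‖ = 1 ∧ -(γ / 2) < inner ℝ ℓ n := fun k => by
    by_contra! h
    exact hH5 ⟨1 / (k + 1), by positivity, 2 / γ, by positivity, by
      simpa only [CondH5, one_div_div] using h⟩
  choose t ht x hx hbad using hbad
  let U : Ultrafilter ℕ := Ultrafilter.of atTop
  have hU : (U : Filter ℕ) ≤ atTop := Ultrafilter.of_le atTop
  obtain ⟨t₀, ht₀, htU⟩ := isCompact_Icc.exists_tendsto_of_ultrafilter U (.of_forall ht)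
  have hC := hH2.tendsto_hausdorffEDist ht ht₀ htU
  have hA k : UniformProxRegular ρ (C (t k)) := (hH1 _ (ht k)).2.2
  obtain ⟨x₀, hx₀, hxU⟩ : ∃ x₀ ∈ frontier (C t₀), Tendsto x U (𝓝 x₀) := by
    -- any unit vectors `e k` will do here
    choose e he _ using fun k => hsup _ (ht k) _ (hx k)
    choose y hyC hyx n hnC hn1 _ using fun k => hbad k (e k) (he k)
    obtain ⟨x₀, hx₀, hyU⟩ := exists_tendsto_mem_frontier_of_uniformProxRegular hρ hA
      (hH1 t₀ ht₀).2.1 (hH3 t₀ ht₀) hC hyC hnC hn1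
    exact ⟨x₀, hx₀, tendsto_of_norm_sub_lt_one_div hU hyU hyx⟩
  obtain ⟨ℓ, hℓ, hℓγ⟩ := hsup t₀ ht₀ x₀ hx₀
  choose y hyC hyx n hnC hn1 hℓn using fun k => hbad k ℓ hℓ
  have hyU : Tendsto y U (𝓝 x₀) :=
    tendsto_of_norm_sub_lt_one_div hU hxU fun k => by rw [norm_sub_rev]; exact hyx k
  obtain ⟨n₀, hn₀C, hn₀, hnU⟩ :=
    exists_tendsto_mem_proxNormalCone_of_uniformProxRegular hρ hA hC hyU hyC hnC hn1
  have hlim : -(γ / 2) ≤ inner ℝ ℓ n₀ :=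
    ge_of_tendsto (tendsto_const_nhds.inner hnU) (.of_forall fun k => (hℓn k).le)
  linarith [hℓγ n₀ hn₀C hn₀]

theorem stmt10 {H : Type*} [NormedAddCommGroup H] [InnerProductSpace ℝ H]
    [FiniteDimensional ℝ H]
    (T : ℝ) (hT : 0 < T) (C : ℝ → Set H)
    (ρ : ℝ) (hρ : 0 < ρ)
    (hH1 : ∀ t ∈ Icc (0:ℝ) T, (C t).Nonempty ∧ IsClosed (C t) ∧ UniformProxRegular ρ (C t))
    (hH2 : HausdorffCts T C)
    (hH3 : ∀ t ∈ Icc (0:ℝ) T, IsCompact (frontier (C t)))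
    (γ : ℝ) (hγ : 0 < γ)
    (hsup : ∀ t ∈ Icc (0:ℝ) T, ∀ x ∈ frontier (C t), ∃ ℓ : H, ‖ℓ‖ = 1 ∧
      ∀ n ∈ proxNormalCone (C t) x, ‖n‖ = 1 → (inner ℝ ℓ n : ℝ) ≤ -γ) :
    ∃ δ > 0, ∃ L > 0, CondH5 T C δ L :=
  stmt10_general T C ρ hρ hH1 hH2 hH3 γ hγ hsup
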